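/- arXiv:math/0309356 — 2 statements merged into one kernel-verified Lean document; each statement's English description precedes it below -/
import Mathlib

section
/- Let M be a compact metric space with Borel probability measure λ, V : M × M → ℝ continuous symmetric with ⟨Vg,g⟩_λ ≥ 0 for all g ∈ L²(λ) (a Mercer kernel). Suppose also that x ↦ ∫ V(x,y) dλ(y) is constant. Then f ≡ 1 is the unique continuous positive probability density satisfying f = ξ(Vf), i.e. λ is the unique fixed point of Π. -/
/-!
Put `h = f - 1`, so that `∫ h = 0`. Taking logarithms in `f = ξ(Vf)` gives
`Vf = -log f - log Z`, and since `V1` is constant, `Vh = -log f + const`. Hence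
`0 ≤ ⟨Vh, h⟩ = -∫ (f - 1) log f`, while the integrand `(f - 1) log f` is nonnegative and
vanishes only where `f = 1`; continuity of `f` and full support of `λ` give `f ≡ 1`.
-/

open MeasureTheory

namespace Real

lemma sub_one_mul_log_pos {t : ℝ} (ht : 0 < t) (ht1 : t ≠ 1) : 0 < (t - 1) * log t := by
  rcases lt_or_gt_of_ne ht1 with h | h
  · exact mul_pos_of_neg_of_neg (sub_neg.2 h) (log_neg ht h)
  · exact mul_pos (sub_pos.2 h) (log_pos h)

lemma sub_one_mul_log_nonneg {t : ℝ} (ht : 0 < t) : 0 ≤ (t - 1) * log t := by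
  rcases eq_or_ne t 1 with rfl | ht1
  · simp
  · exact (sub_one_mul_log_pos ht ht1).le

lemma eq_neg_log_add_log_of_eq_exp_neg_div {a u Z : ℝ} (ha : 0 < a) (h : a = exp (-u) / Z) :
    u = -(log a + log Z) := by
  have hZ : 0 < Z := (div_pos_iff_of_pos_left (exp_pos _)).1 (h ▸ ha)
  have hexp : exp (-u) = a * Z := by rw [h, div_mul_cancel₀ _ hZ.ne']
  have := congrArg log hexp
  rw [log_exp, log_mul ha.ne' hZ.ne'] at this
  linarith

end Real

lemma integral_sub_one_mul_add_const {X : Type*} [MeasurableSpace X] {μ : Measure X}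
    [IsProbabilityMeasure μ] {f g : X → ℝ} (hf : Integrable f μ)
    (hfg : Integrable (fun x => (f x - 1) * g x) μ) (hf1 : ∫ x, f x ∂μ = 1) (a : ℝ) :
    ∫ x, (f x - 1) * (g x + a) ∂μ = ∫ x, (f x - 1) * g x ∂μ := by
  have hmean : ∫ x, (f x - 1) ∂μ = 0 := by
    rw [integral_sub hf (integrable_const 1), hf1]
    simp
  have hconst : Integrable (fun x => (f x - 1) * a) μ := (hf.sub (integrable_const 1)).mul_const a
  simp_rw [mul_add]
  rw [integral_add hfg hconst, integral_mul_const, hmean, zero_mul, add_zero]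

section CompactSpace

variable {X : Type*} [TopologicalSpace X] [CompactSpace X] [MeasurableSpace X]
  [OpensMeasurableSpace X] {μ : Measure X}

lemma Continuous.integrable_of_compactSpace [IsFiniteMeasure μ] {f : X → ℝ}
    (hf : Continuous f) : Integrable f μ :=
  hf.integrable_of_hasCompactSupport (.of_compactSpace f)

lemma integral_kernel_mul_sub_one_mul_sub_one [FirstCountableTopology X] [T2Space X]
    [IsProbabilityMeasure μ]
    {V : X → X → ℝ} (hV : Continuous fun p : X × X => V p.1 p.2) {f : X → ℝ}
    (hf : Continuous f) (hf1 : ∫ x, f x ∂μ = 1) {c : ℝ} (hc : ∀ x, ∫ y, V x y ∂μ = c) :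
    ∫ x, ∫ y, V x y * (f x - 1) * (f y - 1) ∂μ ∂μ =
      ∫ x, (f x - 1) * ∫ y, V x y * f y ∂μ ∂μ := by
  have hVx : ∀ x, Continuous fun y => V x y := fun x => hV.comp (.prodMk_right x)
  have hVf : Continuous fun x => ∫ y, V x y * f y ∂μ := by
    simpa using continuous_parametric_integral_of_continuous (μ := μ)
      (f := fun x y => V x y * f y) (hV.mul (hf.comp continuous_snd)) isCompact_univ
  have hrow : ∀ x, ∫ y, V x y * (f x - 1) * (f y - 1) ∂μ
      = (f x - 1) * ((∫ y, V x y * f y ∂μ) + -c) := by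
    intro x
    have hsplit : (fun y => V x y * (f x - 1) * (f y - 1))
        = fun y => (f x - 1) * (V x y * f y - V x y) := by
      funext y; ring
    rw [hsplit, integral_const_mul, integral_sub (f := fun y => V x y * f y)
      ((hVx x).mul hf).integrable_of_compactSpace (hVx x).integrable_of_compactSpace, hc x,
      ← sub_eq_add_neg]
  simp_rw [hrow]
  exact integral_sub_one_mul_add_const hf.integrable_of_compactSpace
    ((hf.sub continuous_const).mul hVf).integrable_of_compactSpace hf1 _

end CompactSpace

theorem stmt4_general {M : Type*} [MetricSpace M] [CompactSpace M] [MeasurableSpace M]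
    [BorelSpace M] (lam : Measure M) [IsProbabilityMeasure lam]
    [lam.IsOpenPosMeasure]
    (V : M → M → ℝ) (hV : Continuous fun p : M × M => V p.1 p.2)
    (hpos : ∀ g : M → ℝ, MemLp g 2 lam →
      0 ≤ ∫ x, ∫ y, V x y * g x * g y ∂lam ∂lam)
    (hconst : ∃ c : ℝ, ∀ x, (∫ y, V x y ∂lam) = c) :
    ∀ f : M → ℝ, Continuous f → (∀ x, 0 < f x) → (∫ x, f x ∂lam) = 1 →
      (∀ x, f x = Real.exp (-(∫ y, V x y * f y ∂lam)) /
        ∫ y, Real.exp (-(∫ z, V y z * f z ∂lam)) ∂lam) →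
      ∀ x, f x = 1 := by
  intro f hf hfpos hf1 hfix x₀
  obtain ⟨c, hc⟩ := hconst
  set Z := ∫ y, Real.exp (-(∫ z, V y z * f z ∂lam)) ∂lam
  have hVf : ∀ x, ∫ y, V x y * f y ∂lam = -Real.log (f x) + -Real.log Z := fun x => by
    rw [Real.eq_neg_log_add_log_of_eq_exp_neg_div (hfpos x) (hfix x), neg_add]
  have hh : Continuous fun x => f x - 1 := hf.sub continuous_const
  have hlogf : Continuous fun x => Real.log (f x) := hf.log fun x => (hfpos x).ne'
  have hquad := hpos _ (hh.memLp_of_hasCompactSupport (.of_compactSpace _))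
  rw [integral_kernel_mul_sub_one_mul_sub_one hV hf hf1 hc] at hquad
  simp_rw [hVf] at hquad
  rw [integral_sub_one_mul_add_const (g := fun x => -Real.log (f x))
    hf.integrable_of_compactSpace (hh.mul hlogf.neg).integrable_of_compactSpace hf1] at hquad
  have hint : ∫ x, (f x - 1) * Real.log (f x) ∂lam ≤ 0 := by
    simpa [mul_neg, integral_neg] using hquad
  by_contra hx₀
  exact hint.not_gt <| integral_pos_of_integrable_nonneg_nonzero (hh.mul hlogf)
    (hh.mul hlogf).integrable_of_compactSpace (fun x => Real.sub_one_mul_log_nonneg (hfpos x))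
    (Real.sub_one_mul_log_pos (hfpos x₀) hx₀).ne'

/-- If `V` is a Mercer kernel (continuous, symmetric, positive semidefinite on
`L²(λ)`) and `x ↦ ∫ V(x,y) dλ(y)` is constant, then `f ≡ 1` is the unique
continuous positive probability density with `f = ξ(Vf)`; i.e. `λ` is the
unique fixed point of `Π`. -/
theorem stmt4 {M : Type*} [MetricSpace M] [CompactSpace M] [MeasurableSpace M]
    [BorelSpace M] (lam : Measure M) [IsProbabilityMeasure lam]
    [lam.IsOpenPosMeasure]
    (V : M → M → ℝ) (hV : Continuous fun p : M × M => V p.1 p.2)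
    (hsymm : ∀ x y, V x y = V y x)
    (hpos : ∀ g : M → ℝ, MemLp g 2 lam →
      0 ≤ ∫ x, ∫ y, V x y * g x * g y ∂lam ∂lam)
    (hconst : ∃ c : ℝ, ∀ x, (∫ y, V x y ∂lam) = c) :
    ∀ f : M → ℝ, Continuous f → (∀ x, 0 < f x) → (∫ x, f x ∂lam) = 1 →
      (∀ x, f x = Real.exp (-(∫ y, V x y * f y ∂lam)) /
        ∫ y, Real.exp (-(∫ z, V y z * f z ∂lam)) ∂lam) →
      ∀ x, f x = 1 :=
  stmt4_general lam V hV hpos hconst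
end

section
/- Let M be a compact metric space with Borel probability measure λ and V : M × M → ℝ continuous symmetric. Let J(f) = (1/2)⟨Vf, f⟩_λ + ⟨f, log f⟩_λ on {f ∈ C(M) : f > 0, ∫ f dλ = 1} and for each such f define K_f(g) = ⟨Vf, g⟩_λ + ⟨g, log g⟩_λ. Then along the flow of X(f) = −f + ξ(Vf), the derivative of J satisfies DJ(f)·X(f) = DK_f(f)·(ξ(Vf) − f) ≤ 0, with equality if and only if f = ξ(Vf). Hence J is a strict Lyapunov function for X. -/
/-!
Write `g = Vf`, `ξ = ξ(g)` and `Z = ∫ exp (-g) dλ`, so that `log ξ = -g - log Z`. Since `ξ` and `f`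
are both probability densities, the constant `log Z` integrates to zero against `ξ - f`, and
`⟨g + log f, ξ - f⟩_λ = ⟨log f - log ξ, ξ - f⟩_λ`. As `log` is strictly increasing, the integrand
on the right is pointwise `≤ 0` and vanishes exactly where `f = ξ`; continuity and the full
support of `λ` turn "vanishes a.e." into "vanishes everywhere".
-/

open MeasureTheory Real

theorem Real.log_sub_log_mul_sub_neg {a b : ℝ} (ha : 0 < a) (hb : 0 < b) (hab : a ≠ b) :
    (log a - log b) * (b - a) < 0 := by
  rcases hab.lt_or_gt with h | h
  · exact mul_neg_of_neg_of_pos (sub_neg.2 (log_lt_log ha h)) (sub_pos.2 h)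
  · exact mul_neg_of_pos_of_neg (sub_pos.2 (log_lt_log hb h)) (sub_neg.2 h)

theorem Real.log_sub_log_mul_sub_nonpos {a b : ℝ} (ha : 0 < a) (hb : 0 < b) :
    (log a - log b) * (b - a) ≤ 0 := by
  rcases eq_or_ne a b with rfl | hab
  · simp
  · exact (log_sub_log_mul_sub_neg ha hb hab).le

section GibbsDensity

variable {M : Type*} [TopologicalSpace M] [MeasurableSpace M]

/-- The Gibbs density, `ξ(h)` in the paper's notation. -/
noncomputable def gibbsDensity (μ : Measure M) (h : M → ℝ) (x : M) : ℝ :=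
  exp (-h x) / ∫ y, exp (-h y) ∂μ

theorem continuous_gibbsDensity (μ : Measure M) {h : M → ℝ} (hh : Continuous h) :
    Continuous (gibbsDensity μ h) :=
  (continuous_exp.comp hh.neg).div_const _

variable [CompactSpace M] [OpensMeasurableSpace M]

theorem Continuous.integrable_of_compactSpace_s17 (μ : Measure M) [IsFiniteMeasure μ] {u : M → ℝ}
    (hu : Continuous u) : Integrable u μ :=
  hu.integrable_of_hasCompactSupport (HasCompactSupport.of_compactSpace u)

theorem continuous_integral_of_continuous_uncurry {X : Type*} [TopologicalSpace X]
    [FirstCountableTopology X] [LocallyCompactSpace X] (μ : Measure M) [IsFiniteMeasure μ]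
    {K : X → M → ℝ} (hK : Continuous (Function.uncurry K)) :
    Continuous fun x => ∫ y, K x y ∂μ := by
  simpa only [setIntegral_univ] using
    continuous_parametric_integral_of_continuous (μ := μ) hK isCompact_univ

variable (μ : Measure M) [IsProbabilityMeasure μ] {h : M → ℝ}

theorem integral_exp_neg_pos (hh : Continuous h) : 0 < ∫ y, exp (-h y) ∂μ :=
  integral_exp_pos ((continuous_exp.comp hh.neg).integrable_of_compactSpace_s17 μ)

theorem gibbsDensity_pos (hh : Continuous h) (x : M) : 0 < gibbsDensity μ h x :=
  div_pos (exp_pos _) (integral_exp_neg_pos μ hh)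

theorem integral_gibbsDensity (hh : Continuous h) : ∫ x, gibbsDensity μ h x ∂μ = 1 :=
  (integral_div _ _).trans (div_self (integral_exp_neg_pos μ hh).ne')

theorem log_gibbsDensity (hh : Continuous h) (x : M) :
    log (gibbsDensity μ h x) = -h x - log (∫ y, exp (-h y) ∂μ) := by
  rw [gibbsDensity, log_div (exp_pos _).ne' (integral_exp_neg_pos μ hh).ne', log_exp]

variable {f : M → ℝ}

theorem continuous_log_sub_log_gibbsDensity_mul_sub (hh : Continuous h) (hf : Continuous f)
    (hfpos : ∀ x, 0 < f x) :
    Continuous fun x => (log (f x) - log (gibbsDensity μ h x)) * (gibbsDensity μ h x - f x) :=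
  have hξ := continuous_gibbsDensity μ hh
  ((hf.log fun x => (hfpos x).ne').sub (hξ.log fun x => (gibbsDensity_pos μ hh x).ne')).mul
    (hξ.sub hf)

/-- The normalising constant of `ξ(h)` drops out because `ξ(h) - f` has integral zero. -/
theorem integral_add_log_mul_gibbsDensity_sub_eq (hh : Continuous h) (hf : Continuous f)
    (hfpos : ∀ x, 0 < f x) (hfint : ∫ x, f x ∂μ = 1) :
    ∫ x, (h x + log (f x)) * (gibbsDensity μ h x - f x) ∂μ =
      ∫ x, (log (f x) - log (gibbsDensity μ h x)) * (gibbsDensity μ h x - f x) ∂μ := by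
  have hdiff : Continuous fun x => gibbsDensity μ h x - f x :=
    (continuous_gibbsDensity μ hh).sub hf
  have hsub : ∫ x, (gibbsDensity μ h x - f x) ∂μ = 0 := by
    rw [integral_sub ((continuous_gibbsDensity μ hh).integrable_of_compactSpace_s17 μ)
      (hf.integrable_of_compactSpace_s17 μ), integral_gibbsDensity μ hh, hfint, sub_self]
  have hpt : ∀ x, (h x + log (f x)) * (gibbsDensity μ h x - f x) =
      (log (f x) - log (gibbsDensity μ h x)) * (gibbsDensity μ h x - f x) -
        log (∫ y, exp (-h y) ∂μ) * (gibbsDensity μ h x - f x) := fun x => by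
    rw [log_gibbsDensity μ hh]; ring
  simp_rw [hpt]
  rw [integral_sub
    ((continuous_log_sub_log_gibbsDensity_mul_sub μ hh hf hfpos).integrable_of_compactSpace_s17 μ)
    ((hdiff.integrable_of_compactSpace_s17 μ).const_mul _), integral_const_mul, hsub, mul_zero,
    sub_zero]

theorem integral_add_log_mul_gibbsDensity_sub_nonpos (hh : Continuous h) (hf : Continuous f)
    (hfpos : ∀ x, 0 < f x) (hfint : ∫ x, f x ∂μ = 1) :
    ∫ x, (h x + log (f x)) * (gibbsDensity μ h x - f x) ∂μ ≤ 0 := by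
  rw [integral_add_log_mul_gibbsDensity_sub_eq μ hh hf hfpos hfint]
  exact integral_nonpos fun x => log_sub_log_mul_sub_nonpos (hfpos x) (gibbsDensity_pos μ hh x)

theorem integral_add_log_mul_gibbsDensity_sub_eq_zero_iff [μ.IsOpenPosMeasure]
    (hh : Continuous h) (hf : Continuous f) (hfpos : ∀ x, 0 < f x) (hfint : ∫ x, f x ∂μ = 1) :
    ∫ x, (h x + log (f x)) * (gibbsDensity μ h x - f x) ∂μ = 0 ↔
      ∀ x, f x = gibbsDensity μ h x := by
  rw [integral_add_log_mul_gibbsDensity_sub_eq μ hh hf hfpos hfint]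
  refine ⟨fun h0 x => by_contra fun hne => ?_, fun hfξ => by simp [hfξ]⟩
  have hcont : Continuous fun y =>
      -((log (f y) - log (gibbsDensity μ h y)) * (gibbsDensity μ h y - f y)) :=
    (continuous_log_sub_log_gibbsDensity_mul_sub μ hh hf hfpos).neg
  have hpos := integral_pos_of_integrable_nonneg_nonzero (μ := μ) (x := x) hcont
    (hcont.integrable_of_compactSpace_s17 μ)
    (fun y => neg_nonneg.2 (log_sub_log_mul_sub_nonpos (hfpos y) (gibbsDensity_pos μ hh y)))
    (neg_ne_zero.2 (log_sub_log_mul_sub_neg (hfpos x) (gibbsDensity_pos μ hh x) hne).ne)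
  rw [integral_neg, h0, neg_zero] at hpos
  exact hpos.false

end GibbsDensity

theorem stmt17_general {M : Type*} [MetricSpace M] [CompactSpace M] [MeasurableSpace M]
    [BorelSpace M] (lam : Measure M) [IsProbabilityMeasure lam]
    [lam.IsOpenPosMeasure]
    (V : M → M → ℝ) (hV : Continuous fun p : M × M => V p.1 p.2)
    (f : M → ℝ) (hf : Continuous f) (hfpos : ∀ x, 0 < f x)
    (hfint : (∫ x, f x ∂lam) = 1) :
    (∫ x, ((∫ y, V x y * f y ∂lam) + Real.log (f x)) *
        ((Real.exp (-(∫ y, V x y * f y ∂lam)) /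
            ∫ y, Real.exp (-(∫ z, V y z * f z ∂lam)) ∂lam) - f x) ∂lam) ≤ 0 ∧
    ((∫ x, ((∫ y, V x y * f y ∂lam) + Real.log (f x)) *
        ((Real.exp (-(∫ y, V x y * f y ∂lam)) /
            ∫ y, Real.exp (-(∫ z, V y z * f z ∂lam)) ∂lam) - f x) ∂lam) = 0 ↔
      ∀ x, f x = Real.exp (-(∫ y, V x y * f y ∂lam)) /
        ∫ y, Real.exp (-(∫ z, V y z * f z ∂lam)) ∂lam) := by
  have hVf : Continuous fun x => ∫ y, V x y * f y ∂lam :=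
    continuous_integral_of_continuous_uncurry lam (K := fun x y => V x y * f y)
      (hV.mul (hf.comp continuous_snd))
  exact ⟨integral_add_log_mul_gibbsDensity_sub_nonpos lam hVf hf hfpos hfint,
    integral_add_log_mul_gibbsDensity_sub_eq_zero_iff lam hVf hf hfpos hfint⟩

/-- Along the vector field `X(f) = −f + ξ(Vf)`, the derivative of the free
energy satisfies `DJ(f)·X(f) = ⟨Vf + log f, ξ(Vf) − f⟩_λ ≤ 0`, with equality
if and only if `f = ξ(Vf)`: `J` is a strict Lyapunov function for `X`. -/
theorem stmt17 {M : Type*} [MetricSpace M] [CompactSpace M] [MeasurableSpace M]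
    [BorelSpace M] (lam : Measure M) [IsProbabilityMeasure lam]
    [lam.IsOpenPosMeasure]
    (V : M → M → ℝ) (hV : Continuous fun p : M × M => V p.1 p.2)
    (hsymm : ∀ x y, V x y = V y x)
    (f : M → ℝ) (hf : Continuous f) (hfpos : ∀ x, 0 < f x)
    (hfint : (∫ x, f x ∂lam) = 1) :
    (∫ x, ((∫ y, V x y * f y ∂lam) + Real.log (f x)) *
        ((Real.exp (-(∫ y, V x y * f y ∂lam)) /
            ∫ y, Real.exp (-(∫ z, V y z * f z ∂lam)) ∂lam) - f x) ∂lam) ≤ 0 ∧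
    ((∫ x, ((∫ y, V x y * f y ∂lam) + Real.log (f x)) *
        ((Real.exp (-(∫ y, V x y * f y ∂lam)) /
            ∫ y, Real.exp (-(∫ z, V y z * f z ∂lam)) ∂lam) - f x) ∂lam) = 0 ↔
      ∀ x, f x = Real.exp (-(∫ y, V x y * f y ∂lam)) /
        ∫ y, Real.exp (-(∫ z, V y z * f z ∂lam)) ∂lam) :=
  stmt17_general lam V hV f hf hfpos hfint
end
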